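/- For all integers n ≥ 2, d, p with d ≠ p, the identity ∑_{k=0}^{n−2} (p^{n−1−k} − 1) · ∑_{i=0}^{k} C(n,i)(−1)^i d^{k−i} = (p−1) · ((d−1)^{n−1} − (p−1)^{n−1})/(d−p) holds (as an identity of rational numbers, or equivalently after clearing the denominator d−p). -/
import Mathlib

open Finset

private lemma binom_sum (m : ℕ) (x : ℚ) :
    ∑ l ∈ range (m + 1), (-1 : ℚ) ^ l * (m.choose l : ℚ) * x ^ (m - l) = (x - 1) ^ m := by
  rw [show (x - 1 : ℚ) = x + (-1) by ring, add_pow, ← Finset.sum_range_reflect]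
  refine Finset.sum_congr rfl fun l hl => ?_
  rw [Finset.mem_range, Nat.lt_succ_iff] at hl
  rw [show m + 1 - 1 - l = m - l by omega, Nat.choose_symm hl, show m - (m - l) = l by omega]
  ring

private lemma alt_sum (m : ℕ) : ∀ t, t ≤ m →
    ∑ i ∈ range (t + 1), (-1 : ℚ) ^ i * (((m + 1).choose i : ℚ)) = (-1) ^ t * (m.choose t : ℚ) := by
  intro t
  induction t with
  | zero => simp
  | succ t ih =>
    intro ht
    rw [Finset.sum_range_succ, ih (by omega), Nat.choose_succ_succ]
    push_cast
    ring

private lemma swap_sum (m : ℕ) (f : ℕ → ℕ → ℚ) :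
    ∑ k ∈ range m, ∑ i ∈ range (k + 1), f i k
      = ∑ i ∈ range m, ∑ j ∈ range (m - i), f i (i + j) := by
  induction m with
  | zero => simp
  | succ m ih =>
    rw [Finset.sum_range_succ, ih,
      Finset.sum_range_succ (fun i => ∑ j ∈ range (m + 1 - i), f i (i + j))]
    have h1 : ∀ i ∈ range m, ∑ j ∈ range (m + 1 - i), f i (i + j)
        = ∑ j ∈ range (m - i), f i (i + j) + f i m := by
      intro i hi
      rw [Finset.mem_range] at hi
      rw [show m + 1 - i = (m - i) + 1 by omega, Finset.sum_range_succ,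
        show i + (m - i) = m by omega]
    rw [Finset.sum_congr rfl h1, Finset.sum_add_distrib, Finset.sum_range_succ]
    rw [show m + 1 - m = 1 by omega]
    simp [Finset.sum_range_one]
    ring

private lemma geom_aux (t : ℕ) (q r : ℚ) :
    ∑ j ∈ range t, (r ^ (t - j) - 1) * q ^ j * (q - r)
      = r * q ^ t - r ^ (t + 1) + (r - q) * ∑ j ∈ range t, q ^ j := by
  have key : ∑ j ∈ range t, q ^ j * r ^ (t - 1 - j) * (q - r) = q ^ t - r ^ t := by
    rw [← geom_sum₂_mul q r t, Finset.sum_mul]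
  have expand : ∀ j ∈ range t, (r ^ (t - j) - 1) * q ^ j * (q - r)
      = r * (q ^ j * r ^ (t - 1 - j) * (q - r)) + (r - q) * q ^ j := by
    intro j hj
    rw [Finset.mem_range] at hj
    rw [show t - j = (t - 1 - j) + 1 by omega]
    ring
  rw [Finset.sum_congr rfl expand, Finset.sum_add_distrib, ← Finset.mul_sum, key,
    ← Finset.mul_sum]
  ring

private lemma key_lemma (m : ℕ) (q r : ℚ) :
    (∑ k ∈ range m, (r ^ (m - k) - 1) *
        ∑ i ∈ range (k + 1), ((m + 1).choose i : ℚ) * (-1) ^ i * q ^ (k - i)) * (q - r)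
      = (r - 1) * ((q - 1) ^ m - (r - 1) ^ m) := by
  have step1 :
      (∑ k ∈ range m, (r ^ (m - k) - 1) *
          ∑ i ∈ range (k + 1), ((m + 1).choose i : ℚ) * (-1) ^ i * q ^ (k - i)) * (q - r)
        = ∑ i ∈ range m, (((m + 1).choose i : ℚ) * (-1) ^ i) *
            (r * q ^ (m - i) - r ^ ((m - i) + 1) + (r - q) * ∑ j ∈ range (m - i), q ^ j) := by
    rw [Finset.sum_mul]
    have h1 : ∀ k ∈ range m,
        (r ^ (m - k) - 1) *
            (∑ i ∈ range (k + 1), ((m + 1).choose i : ℚ) * (-1) ^ i * q ^ (k - i)) * (q - r)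
          = ∑ i ∈ range (k + 1),
              (((m + 1).choose i : ℚ) * (-1) ^ i) * ((r ^ (m - k) - 1) * q ^ (k - i) * (q - r)) := by
      intro k _
      rw [Finset.mul_sum, Finset.sum_mul]
      exact Finset.sum_congr rfl fun i _ => by ring
    rw [Finset.sum_congr rfl h1,
      swap_sum m (fun i k => (((m + 1).choose i : ℚ) * (-1) ^ i) *
        ((r ^ (m - k) - 1) * q ^ (k - i) * (q - r)))]
    refine Finset.sum_congr rfl fun i hi => ?_
    rw [← geom_aux (m - i) q r, Finset.mul_sum]
    refine Finset.sum_congr rfl fun j hj => ?_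
    rw [show m - (i + j) = m - i - j by omega, show i + j - i = j by omega]
  rw [step1]
  have split : ∀ i ∈ range m,
      (((m + 1).choose i : ℚ) * (-1) ^ i) *
          (r * q ^ (m - i) - r ^ ((m - i) + 1) + (r - q) * ∑ j ∈ range (m - i), q ^ j)
        = r * ((((m + 1).choose i : ℚ) * (-1) ^ i) * q ^ (m - i))
            - r * ((((m + 1).choose i : ℚ) * (-1) ^ i) * r ^ (m - i))
            + (r - q) * ((((m + 1).choose i : ℚ) * (-1) ^ i) * ∑ j ∈ range (m - i), q ^ j) := by
    intro i _
    ring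
  rw [Finset.sum_congr rfl split, Finset.sum_add_distrib, Finset.sum_sub_distrib,
    ← Finset.mul_sum, ← Finset.mul_sum, ← Finset.mul_sum]
  -- Now: r * A - r * B + (r - q) * Cs = (r-1) * ((q-1)^m - (r-1)^m)
  have hC : (∑ i ∈ range m, (((m + 1).choose i : ℚ) * (-1) ^ i) * ∑ j ∈ range (m - i), q ^ j)
      = ∑ l ∈ range m, (-1 : ℚ) ^ l * (m.choose l : ℚ) * q ^ (m - 1 - l) := by
    have e1 := swap_sum m (fun i k => (((m + 1).choose i : ℚ) * (-1) ^ i) * q ^ (k - i))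
    have e2 := swap_sum m (fun a k => (((m + 1).choose (k - a) : ℚ) * (-1) ^ (k - a)) * q ^ a)
    have e3 : ∀ k, (∑ i ∈ range (k + 1), (((m + 1).choose i : ℚ) * (-1) ^ i) * q ^ (k - i))
        = ∑ a ∈ range (k + 1), (((m + 1).choose (k - a) : ℚ) * (-1) ^ (k - a)) * q ^ a := by
      intro k
      rw [← Finset.sum_range_reflect
        (fun a => (((m + 1).choose (k - a) : ℚ) * (-1) ^ (k - a)) * q ^ a) (k + 1)]
      refine Finset.sum_congr rfl fun i hi => ?_
      rw [Finset.mem_range, Nat.lt_succ_iff] at hi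
      rw [show k + 1 - 1 - i = k - i by omega, show k - (k - i) = i by omega]
    have s1 : (∑ i ∈ range m, (((m + 1).choose i : ℚ) * (-1) ^ i) * ∑ j ∈ range (m - i), q ^ j)
        = ∑ i ∈ range m, ∑ j ∈ range (m - i),
            (((m + 1).choose i : ℚ) * (-1) ^ i) * q ^ ((i + j) - i) := by
      refine Finset.sum_congr rfl fun i _ => ?_
      rw [Finset.mul_sum]
      refine Finset.sum_congr rfl fun j _ => ?_
      rw [show i + j - i = j by omega]
    rw [s1, ← e1, Finset.sum_congr rfl (fun k _ => e3 k), e2]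
    have s2 : ∀ a ∈ range m,
        (∑ j ∈ range (m - a), (((m + 1).choose ((a + j) - a) : ℚ) * (-1) ^ ((a + j) - a)) * q ^ a)
          = ((-1 : ℚ) ^ (m - 1 - a) * (m.choose (m - 1 - a) : ℚ)) * q ^ a := by
      intro a ha
      rw [Finset.mem_range] at ha
      rw [← Finset.sum_mul]
      congr 1
      have h7 : (∑ j ∈ range (m - a), (((m + 1).choose ((a + j) - a) : ℚ) * (-1) ^ ((a + j) - a)))
          = ∑ j ∈ range ((m - 1 - a) + 1), (-1 : ℚ) ^ j * (((m + 1).choose j : ℚ)) := by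
        rw [show m - a = (m - 1 - a) + 1 by omega]
        refine Finset.sum_congr rfl fun j _ => ?_
        rw [show a + j - a = j by omega]
        ring
      rw [h7, alt_sum m (m - 1 - a) (by omega)]
    rw [Finset.sum_congr rfl s2,
      ← Finset.sum_range_reflect (fun l => (-1 : ℚ) ^ l * (m.choose l : ℚ) * q ^ (m - 1 - l)) m]
    refine Finset.sum_congr rfl fun a ha => ?_
    rw [Finset.mem_range] at ha
    rw [show m - 1 - (m - 1 - a) = a by omega]
  have hqC : q * (∑ l ∈ range m, (-1 : ℚ) ^ l * (m.choose l : ℚ) * q ^ (m - 1 - l))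
      = (q - 1) ^ m - (-1 : ℚ) ^ m := by
    rw [Finset.mul_sum]
    have h8 : ∀ l ∈ range m, q * ((-1 : ℚ) ^ l * (m.choose l : ℚ) * q ^ (m - 1 - l))
        = (-1 : ℚ) ^ l * (m.choose l : ℚ) * q ^ (m - l) := by
      intro l hl
      rw [Finset.mem_range] at hl
      rw [show m - l = (m - 1 - l) + 1 by omega]
      ring
    rw [Finset.sum_congr rfl h8]
    have hb := binom_sum m q
    rw [Finset.sum_range_succ, Nat.choose_self, Nat.sub_self, pow_zero, Nat.cast_one,
      mul_one, mul_one] at hb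
    linear_combination hb
  have hAC : (∑ i ∈ range m, (((m + 1).choose i : ℚ) * (-1) ^ i) * q ^ (m - i))
        + (∑ l ∈ range m, (-1 : ℚ) ^ l * (m.choose l : ℚ) * q ^ (m - 1 - l))
      = (q - 1) ^ m - (-1 : ℚ) ^ m - (-1 : ℚ) ^ m * m := by
    set w : ℕ → ℚ := fun i => (-1 : ℚ) ^ i * (((m + 1).choose i : ℚ) - (m.choose i : ℚ)) * q ^ (m - i)
      with hw
    have h1 : ∀ l ∈ range m, w (l + 1) = -((-1 : ℚ) ^ l * (m.choose l : ℚ) * q ^ (m - 1 - l)) := by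
      intro l hl
      rw [Finset.mem_range] at hl
      simp only [hw]
      rw [show m - (l + 1) = m - 1 - l by omega, Nat.choose_succ_succ]
      push_cast
      ring
    have h2 : ∑ l ∈ range m, w (l + 1) = ∑ i ∈ range m, w i + w m - w 0 := by
      have ha := Finset.sum_range_succ' w m
      have hb := Finset.sum_range_succ w m
      linarith
    have hw0 : w 0 = 0 := by simp [hw]
    have hwm : w m = (-1 : ℚ) ^ m * m := by
      simp only [hw]
      rw [Nat.choose_succ_self_right, Nat.choose_self, Nat.sub_self, pow_zero]
      push_cast
      ring
    have h4 : (∑ i ∈ range m, (((m + 1).choose i : ℚ) * (-1) ^ i) * q ^ (m - i))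
        - ∑ i ∈ range m, w i = (q - 1) ^ m - (-1 : ℚ) ^ m := by
      rw [← Finset.sum_sub_distrib]
      have h5 : ∀ i ∈ range m, (((m + 1).choose i : ℚ) * (-1) ^ i) * q ^ (m - i) - w i
          = (-1 : ℚ) ^ i * (m.choose i : ℚ) * q ^ (m - i) := by
        intro i _
        simp only [hw]
        ring
      rw [Finset.sum_congr rfl h5]
      have hb := binom_sum m q
      rw [Finset.sum_range_succ, Nat.choose_self, Nat.sub_self, pow_zero, Nat.cast_one,
        mul_one, mul_one] at hb
      linear_combination hb
    have hx : ∑ l ∈ range m, (-1 : ℚ) ^ l * (m.choose l : ℚ) * q ^ (m - 1 - l)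
        = -∑ l ∈ range m, w (l + 1) := by
      rw [← Finset.sum_neg_distrib]
      exact Finset.sum_congr rfl fun l hl => by rw [h1 l hl, neg_neg]
    rw [hx, h2, hw0, hwm]
    linear_combination h4
  have hB : r * (∑ i ∈ range m, (((m + 1).choose i : ℚ) * (-1) ^ i) * r ^ (m - i))
      = (r - 1) ^ (m + 1) - (-1 : ℚ) ^ m * ((m : ℚ) + 1) * r + (-1 : ℚ) ^ m := by
    rw [Finset.mul_sum]
    have h9 : ∀ i ∈ range m, r * ((((m + 1).choose i : ℚ) * (-1) ^ i) * r ^ (m - i))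
        = (-1 : ℚ) ^ i * (((m + 1).choose i : ℚ)) * r ^ (m + 1 - i) := by
      intro i hi
      rw [Finset.mem_range] at hi
      rw [show m + 1 - i = (m - i) + 1 by omega]
      ring
    rw [Finset.sum_congr rfl h9]
    have hb := binom_sum (m + 1) r
    rw [Finset.sum_range_succ, Finset.sum_range_succ, Nat.choose_succ_self_right,
      Nat.choose_self, show m + 1 - m = 1 by omega, Nat.sub_self, pow_zero, pow_one] at hb
    push_cast at hb
    linear_combination hb
  linear_combination r * hAC - hB - hqC + (r - q) * hC

/-- for all integers `n ≥ 2`, `d`, `p` with `d ≠ p`,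
`∑_{k=0}^{n−2} (p^{n−1−k} − 1) · ∑_{i=0}^{k} C(n,i)(−1)^i d^{k−i}
  = (p−1)·((d−1)^{n−1} − (p−1)^{n−1})/(d−p)` as rational numbers. -/
theorem stmt1 (n : ℕ) (hn : 2 ≤ n) (d p : ℤ) (hdp : d ≠ p) :
    (∑ k ∈ Finset.range (n - 1), ((p : ℚ) ^ (n - 1 - k) - 1) *
        ∑ i ∈ Finset.range (k + 1), (n.choose i : ℚ) * (-1) ^ i * (d : ℚ) ^ (k - i))
      = ((p : ℚ) - 1) * (((d : ℚ) - 1) ^ (n - 1) - ((p : ℚ) - 1) ^ (n - 1)) /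
          ((d : ℚ) - (p : ℚ)) := by
  obtain ⟨m, rfl⟩ : ∃ m, n = m + 2 := ⟨n - 2, by omega⟩
  have hqr : (d : ℚ) - (p : ℚ) ≠ 0 := sub_ne_zero.mpr (by exact_mod_cast hdp)
  rw [eq_div_iff hqr]
  have h := key_lemma (m + 1) (d : ℚ) (p : ℚ)
  simp only [show m + 1 + 1 = m + 2 from rfl, show m + 2 - 1 = m + 1 from rfl] at h ⊢
  exact h
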